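/- arXiv:1408.0143 — 3 statements merged into one kernel-verified Lean document; each statement's English description precedes it below -/
import Mathlib

section
/- Let F be a field, N a natural number, V an (N+1)-dimensional vector space over F, and B a Billiard Array on V. Then B is injective: if λ, μ are locations in Δ_N with B_λ = B_μ, then λ = μ. -/
/-!
For a coordinate `i` and a level `a`, let `L i a` be the sum of the `B v` over the `i`-line at
level `a`. Lines are direct, so `dim L i a = N + 1 - a`. A dependent black 3-clique spans a plane
that any two of its points span, so every location with `v i > 0` lies in the sum of two
locations of the `i`-line one level lower; hence `L i` is decreasing, and by induction on the third
coordinate `L i a ⊔ L j c = V` whenever `a + c ≤ N + 1`. Counting dimensions, `L i a ⊓ L j c` is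
then the sum of `B` over the points of the `j`-line at level `c` whose `i`-coordinate is at
least `a`. If `B l = B m` with `l i < m i`, then `B l` lies in `L i (l i + 1) ⊓ L j (l j)`, i.e. in
the sum of `B` over other points of the `j`-line through `l`, contradicting directness of that line.
-/

/-- `Δ_N`: the set of triples of natural numbers with sum `N`. -/
def BA.Delta (N : ℕ) : Set (Fin 3 → ℕ) := {v | v 0 + v 1 + v 2 = N}

/-- A line in `Δ_N`: the set of locations with a given `η`-coordinate `c`. -/
def BA.IsLine (N : ℕ) (L : Set (Fin 3 → ℕ)) : Prop :=
  ∃ (η : Fin 3) (c : ℕ), c ≤ N ∧ L = {v ∈ BA.Delta N | v η = c}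

/-- The black 3-clique attached to `(r,s,t)`. -/
def BA.blackSet (r s t : ℕ) : Set (Fin 3 → ℕ) :=
  {![r + 1, s, t], ![r, s + 1, t], ![r, s, t + 1]}

/-- A Billiard Array on `V`: a function assigning to each location of `Δ_N` a
one-dimensional subspace of `V`, such that the sum over each line is direct and
the sum over each black 3-clique is not direct. -/
def BA.IsBilliardArray {F V : Type*} [Field F] [AddCommGroup V] [Module F V]
    (N : ℕ) (B : (Fin 3 → ℕ) → Submodule F V) : Prop :=
  (∀ v ∈ BA.Delta N, Module.finrank F (B v) = 1) ∧
  (∀ L : Set (Fin 3 → ℕ), BA.IsLine N L → iSupIndep fun x : L => B x.1) ∧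
  (∀ r s t : ℕ, r + s + t + 1 = N → ¬ iSupIndep fun x : BA.blackSet r s t => B x.1)

namespace BA

open Finset Function Module

lemma eq_or_eq_or_eq {i j k : Fin 3} (hij : i ≠ j) (hik : i ≠ k) (hjk : j ≠ k) (t : Fin 3) :
    t = i ∨ t = j ∨ t = k := by
  revert i j k t; decide

lemma exists_ne_ne (i j : Fin 3) : ∃ k, k ≠ i ∧ k ≠ j := by
  revert i j; decide

lemma sum_eq_add_add (v : Fin 3 → ℕ) {i j k : Fin 3} (hij : i ≠ j) (hik : i ≠ k)
    (hjk : j ≠ k) : ∑ t, v t = v i + v j + v k := by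
  have huniv : (univ : Finset (Fin 3)) = {i, j, k} := by
    ext t; simpa using eq_or_eq_or_eq hij hik hjk t
  rw [huniv, sum_insert (by simp [hij, hik]), sum_pair hjk, add_assoc]

lemma mem_Delta_iff {N : ℕ} {v : Fin 3 → ℕ} : v ∈ Delta N ↔ ∑ t, v t = N := by
  simp [Delta, Fin.sum_univ_three]

lemma sum_add_single (u : Fin 3 → ℕ) (i : Fin 3) :
    ∑ t, (u + Pi.single i 1 : Fin 3 → ℕ) t = ∑ t, u t + 1 := by
  simp [sum_add_distrib]

lemma sub_single_add_single {v : Fin 3 → ℕ} {k : Fin 3} (hk : 0 < v k) :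
    v - Pi.single k 1 + Pi.single k 1 = v := by
  ext t; by_cases htk : t = k <;> simp [htk]; omega

lemma blackSet_eq_range (u : Fin 3 → ℕ) :
    blackSet (u 0) (u 1) (u 2) = Set.range fun i => u + Pi.single i 1 := by
  have h0 : ![u 0 + 1, u 1, u 2] = u + Pi.single 0 1 := by ext t; fin_cases t <;> simp
  have h1 : ![u 0, u 1 + 1, u 2] = u + Pi.single 1 1 := by ext t; fin_cases t <;> simp
  have h2 : ![u 0, u 1, u 2 + 1] = u + Pi.single 2 1 := by ext t; fin_cases t <;> simp
  rw [blackSet, h0, h1, h2]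
  ext
  simp [Fin.exists_fin_succ, eq_comm]

def line (N : ℕ) (i : Fin 3) (c : ℕ) : Finset (Fin 3 → ℕ) :=
  (Nat.antidiagonalTuple 3 N).filter fun v => v i = c

lemma mem_line {N c : ℕ} {i : Fin 3} {v : Fin 3 → ℕ} :
    v ∈ line N i c ↔ v ∈ Delta N ∧ v i = c := by
  simp [line, mem_Delta_iff, Nat.mem_antidiagonalTuple]

lemma isLine_line {N c : ℕ} (i : Fin 3) (hc : c ≤ N) : IsLine N ↑(line N i c) :=
  ⟨i, c, hc, by ext v; simp [mem_line]⟩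

lemma card_filter_line {N c a : ℕ} {i j : Fin 3} (hij : i ≠ j) :
    ((line N j c).filter fun v => a ≤ v i).card = N + 1 - c - a := by
  obtain ⟨k, hki, hkj⟩ := exists_ne_ne i j
  have mem_iff {v : Fin 3 → ℕ} :
      v ∈ (line N j c).filter (fun v => a ≤ v i) ↔ v i + v j + v k = N ∧ v j = c ∧ a ≤ v i := by
    rw [mem_filter, mem_line, mem_Delta_iff, sum_eq_add_add v hij hki.symm hkj.symm, and_assoc]
  let pt : ℕ → Fin 3 → ℕ := fun x t => if t = i then x else if t = j then c else N - c - x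
  have pt_i (x : ℕ) : pt x i = x := if_pos rfl
  have pt_j (x : ℕ) : pt x j = c := by simp [pt, hij.symm]
  have pt_k (x : ℕ) : pt x k = N - c - x := by simp [pt, hki, hkj]
  rw [← Nat.card_Ico a (N + 1 - c)]
  refine card_nbij' (· i) pt ?_ ?_ ?_ ?_
  · intro v hv
    rw [mem_coe, mem_iff] at hv
    simp only [coe_Ico, Set.mem_Ico]
    omega
  · intro x hx
    simp only [coe_Ico, Set.mem_Ico] at hx
    rw [mem_coe, mem_iff, pt_i, pt_j, pt_k]
    omega
  · intro v hv
    rw [mem_coe, mem_iff] at hv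
    ext t
    rcases eq_or_eq_or_eq hij hki.symm hkj.symm t with rfl | rfl | rfl
    · exact pt_i _
    · exact (pt_j _).trans hv.2.1.symm
    · dsimp only
      rw [pt_k]
      omega
  · intro x _
    exact pt_i x

lemma card_line {N c : ℕ} (j : Fin 3) : (line N j c).card = N + 1 - c := by
  obtain ⟨i, hij⟩ := exists_ne j
  simpa using card_filter_line (N := N) (c := c) (a := 0) hij

lemma exists_lt_of_ne {N : ℕ} {v w : Fin 3 → ℕ} (hv : v ∈ Delta N) (hw : w ∈ Delta N)
    (hvw : v ≠ w) : ∃ i, v i < w i := by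
  by_contra! hle
  have heq := (sum_eq_sum_iff_of_le fun i _ => hle i).1
    (by rw [mem_Delta_iff.1 hv, mem_Delta_iff.1 hw])
  exact hvw (funext fun i => (heq i (mem_univ i)).symm)

lemma add_le_of_mem_Delta {N : ℕ} {v : Fin 3 → ℕ} (hv : v ∈ Delta N) {i j : Fin 3}
    (hij : i ≠ j) : v i + v j ≤ N := by
  obtain ⟨k, hki, hkj⟩ := exists_ne_ne i j
  rw [mem_Delta_iff, sum_eq_add_add v hij hki.symm hkj.symm] at hv
  omega

section LinearAlgebra

variable {F V : Type*} [Field F] [AddCommGroup V] [Module F V] [FiniteDimensional F V]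

lemma finrank_sup_eq_two {P Q : Submodule F V} (hP : finrank F P = 1) (hQ : finrank F Q = 1)
    (hPQ : Disjoint P Q) : finrank F ↥(P ⊔ Q) = 2 := by
  have := Submodule.finrank_sup_add_finrank_inf_eq P Q
  rw [hPQ.eq_bot, finrank_bot, hP, hQ] at this
  omega

-- Dependent, pairwise independent lines span a plane, which any two of them already span.
lemma le_sup_of_not_iSupIndep_fin_three {f : Fin 3 → Submodule F V}
    (hf : ∀ i, finrank F (f i) = 1) (hdisj : Pairwise (Disjoint on f)) (hdep : ¬ iSupIndep f)
    (i : Fin 3) {j k : Fin 3} (hjk : j ≠ k) : f i ≤ f j ⊔ f k := by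
  have hatom (t : Fin 3) : IsAtom (f t) := Submodule.isAtom_iff_finrank_eq_one.2 (hf t)
  obtain ⟨i₀, j₀, k₀, h₀₁, h₀₂, h₁₂, hle⟩ :
      ∃ i₀ j₀ k₀, i₀ ≠ j₀ ∧ i₀ ≠ k₀ ∧ j₀ ≠ k₀ ∧ f i₀ ≤ f j₀ ⊔ f k₀ := by
    rw [iSupIndep_fin_three, ← (hatom 0).not_le_iff_disjoint, ← (hatom 1).not_le_iff_disjoint,
      ← (hatom 2).not_le_iff_disjoint] at hdep
    rcases (by tauto : f 0 ≤ f 1 ⊔ f 2 ∨ f 1 ≤ f 2 ⊔ f 0 ∨ f 2 ≤ f 0 ⊔ f 1) with h | h | h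
    exacts [⟨0, 1, 2, by decide, by decide, by decide, h⟩,
      ⟨1, 2, 0, by decide, by decide, by decide, h⟩, ⟨2, 0, 1, by decide, by decide, by decide, h⟩]
  have hplane (t : Fin 3) : f t ≤ f j₀ ⊔ f k₀ := by
    rcases eq_or_eq_or_eq h₀₁ h₀₂ h₁₂ t with rfl | rfl | rfl
    exacts [hle, le_sup_left, le_sup_right]
  have heq : f j ⊔ f k = f j₀ ⊔ f k₀ :=
    Submodule.eq_of_le_of_finrank_le (sup_le (hplane j) (hplane k)) <| by
      rw [finrank_sup_eq_two (hf _) (hf _) (hdisj h₁₂),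
        finrank_sup_eq_two (hf _) (hf _) (hdisj hjk)]
  exact heq ▸ hplane i

lemma finrank_sup_eq_card {ι : Type*} {s : Finset ι} {f : ι → Submodule F V}
    (hs : s.SupIndep f) (hf : ∀ i ∈ s, finrank F (f i) = 1) :
    finrank F ↥(s.sup f) = s.card := by
  classical
  induction s using Finset.induction_on with
  | empty => simp
  | insert a s ha ih =>
    have hdisj : Disjoint (f a) (s.sup f) := hs (subset_insert a s) (mem_insert_self a s) ha
    have := Submodule.finrank_sup_add_finrank_inf_eq (f a) (s.sup f)
    rw [hdisj.eq_bot, finrank_bot, hf a (mem_insert_self a s),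
      ih (hs.subset (subset_insert a s)) fun i hi => hf i (mem_insert_of_mem hi)] at this
    rw [sup_insert, card_insert_of_notMem ha]
    omega

end LinearAlgebra

namespace IsBilliardArray

variable {F V : Type*} [Field F] [AddCommGroup V] [Module F V]
  {N : ℕ} {B : (Fin 3 → ℕ) → Submodule F V}

lemma isAtom (hB : IsBilliardArray N B) {v : Fin 3 → ℕ} (hv : v ∈ Delta N) : IsAtom (B v) :=
  Submodule.isAtom_iff_finrank_eq_one.2 (hB.1 v hv)

lemma supIndep_of_subset_line (hB : IsBilliardArray N B) {s : Finset (Fin 3 → ℕ)} {i : Fin 3}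
    {c : ℕ} (hs : s ⊆ line N i c) : s.SupIndep B := by
  rcases s.eq_empty_or_nonempty with rfl | ⟨v, hv⟩
  · exact supIndep_empty B
  obtain ⟨hvN, hvi⟩ := mem_line.1 (hs hv)
  have hc : c ≤ N := by
    rw [← hvi, ← mem_Delta_iff.1 hvN]
    exact single_le_sum (fun _ _ => Nat.zero_le _) (mem_univ i)
  have hind := hB.2.1 _ (isLine_line i hc)
  intro t ht w hw hwt
  refine (hind ⟨w, hs hw⟩).mono_right (Finset.sup_le fun x hx => ?_)
  exact le_iSup₂_of_le (f := fun (y : ↥(line N i c : Set (Fin 3 → ℕ))) _ => B y) ⟨x, hs (ht hx)⟩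
    (fun h => hwt (Subtype.mk.inj h ▸ hx)) le_rfl

lemma disjoint_sup_of_subset_line (hB : IsBilliardArray N B) {s : Finset (Fin 3 → ℕ)}
    {i : Fin 3} {c : ℕ} (hs : s ⊆ line N i c) {v : Fin 3 → ℕ} (hv : v ∈ line N i c)
    (hvs : v ∉ s) : Disjoint (B v) (s.sup B) :=
  hB.supIndep_of_subset_line (insert_subset hv hs) (subset_insert v s) (mem_insert_self v s) hvs

variable [FiniteDimensional F V]

lemma finrank_sup_of_subset_line (hB : IsBilliardArray N B) {s : Finset (Fin 3 → ℕ)}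
    {i : Fin 3} {c : ℕ} (hs : s ⊆ line N i c) : finrank F ↥(s.sup B) = s.card :=
  finrank_sup_eq_card (hB.supIndep_of_subset_line hs) fun v hv => hB.1 v (mem_line.1 (hs hv)).1

lemma le_sup_of_clique (hB : IsBilliardArray N B) {u : Fin 3 → ℕ} (hu : ∑ t, u t + 1 = N)
    (i : Fin 3) {j k : Fin 3} (hjk : j ≠ k) :
    B (u + Pi.single i 1) ≤ B (u + Pi.single j 1) ⊔ B (u + Pi.single k 1) := by
  have hmem (t : Fin 3) : u + Pi.single t 1 ∈ Delta N :=
    mem_Delta_iff.2 ((sum_add_single u t).trans hu)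
  refine le_sup_of_not_iSupIndep_fin_three (f := fun t => B (u + Pi.single t 1))
    (fun t => hB.1 _ (hmem t)) ?_ ?_ i hjk
  · intro t t' htt'
    obtain ⟨s, hst, hst'⟩ := exists_ne_ne t t'
    refine (supIndep_pair ?_).1 (hB.supIndep_of_subset_line (i := s) (c := u s) ?_)
    · intro h
      simpa [htt'] using congrFun h t
    · simp [insert_subset_iff, mem_line, hmem, hst, hst']
  · intro hind
    have hdep := hB.2.2 (u 0) (u 1) (u 2) (by rw [← hu, Fin.sum_univ_three])
    rw [blackSet_eq_range] at hdep
    exact hdep (hind.comp' (t := fun x => B x.1) Set.rangeFactorization_surjective)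

lemma le_sup_line_pred (hB : IsBilliardArray N B) {v : Fin 3 → ℕ} (hv : v ∈ Delta N)
    {k : Fin 3} (hk : 0 < v k) : B v ≤ (line N k (v k - 1)).sup B := by
  obtain ⟨i, hik⟩ := exists_ne k
  obtain ⟨j, hjk, hji⟩ := exists_ne_ne k i
  set u := v - Pi.single k 1
  have hvu : u + Pi.single k 1 = v := sub_single_add_single hk
  have hu : ∑ t, u t + 1 = N := by rw [← sum_add_single, hvu, ← mem_Delta_iff]; exact hv
  have hmem {t : Fin 3} (htk : t ≠ k) : u + Pi.single t 1 ∈ line N k (v k - 1) :=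
    mem_line.2 ⟨mem_Delta_iff.2 ((sum_add_single u t).trans hu), by simp [u, htk.symm]⟩
  calc B v = B (u + Pi.single k 1) := by rw [hvu]
    _ ≤ B (u + Pi.single i 1) ⊔ B (u + Pi.single j 1) := hB.le_sup_of_clique hu k (Ne.symm hji)
    _ ≤ (line N k (v k - 1)).sup B := sup_le (Finset.le_sup (hmem hik)) (Finset.le_sup (hmem hjk))

lemma antitone_sup_line (hB : IsBilliardArray N B) (i : Fin 3) :
    Antitone fun c => (line N i c).sup B :=
  antitone_nat_of_succ_le fun c => Finset.sup_le fun v hv => by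
    obtain ⟨hv, hvi⟩ := mem_line.1 hv
    simpa [hvi] using hB.le_sup_line_pred hv (k := i) (by omega)

lemma le_sup_line_of_le (hB : IsBilliardArray N B) {v : Fin 3 → ℕ} (hv : v ∈ Delta N)
    {i : Fin 3} {a : ℕ} (ha : a ≤ v i) : B v ≤ (line N i a).sup B :=
  (Finset.le_sup (mem_line.2 ⟨hv, rfl⟩)).trans (hB.antitone_sup_line i ha)

lemma finrank_sup_line (hB : IsBilliardArray N B) (i : Fin 3) (c : ℕ) :
    finrank F ↥((line N i c).sup B) = N + 1 - c := by
  rw [hB.finrank_sup_of_subset_line subset_rfl, card_line]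

lemma le_sup_line_sup_sup_line (hB : IsBilliardArray N B) {i j : Fin 3} (hij : i ≠ j)
    {a c : ℕ} (hac : a + c ≤ N + 1) {v : Fin 3 → ℕ} (hv : v ∈ Delta N) :
    B v ≤ (line N i a).sup B ⊔ (line N j c).sup B := by
  have hcov {w : Fin 3 → ℕ} (hw : w ∈ Delta N) (h : a ≤ w i ∨ c ≤ w j) :
      B w ≤ (line N i a).sup B ⊔ (line N j c).sup B := by
    rcases h with h | h
    exacts [(hB.le_sup_line_of_le hw h).trans le_sup_left,
      (hB.le_sup_line_of_le hw h).trans le_sup_right]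
  obtain ⟨k, hki, hkj⟩ := exists_ne_ne i j
  induction hn : v k generalizing v with
  | zero =>
    have hsum := (sum_eq_add_add v hij hki.symm hkj.symm).symm.trans (mem_Delta_iff.1 hv)
    exact hcov hv (by omega)
  | succ n ih =>
    by_cases h : a ≤ v i ∨ c ≤ v j
    · exact hcov hv h
    calc B v ≤ (line N k (v k - 1)).sup B := hB.le_sup_line_pred hv (by omega)
      _ ≤ _ := Finset.sup_le fun w hw => by
        obtain ⟨hw, hwk⟩ := mem_line.1 hw
        exact ih hw (by omega)

lemma sup_line_sup_sup_line_eq_top (hB : IsBilliardArray N B) (hV : finrank F V = N + 1)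
    {i j : Fin 3} (hij : i ≠ j) {a c : ℕ} (hac : a + c ≤ N + 1) :
    (line N i a).sup B ⊔ (line N j c).sup B = ⊤ := by
  have htop : (line N i 0).sup B = ⊤ :=
    Submodule.eq_top_of_finrank_eq (by rw [hB.finrank_sup_line, hV, Nat.sub_zero])
  rw [eq_top_iff, ← htop]
  exact Finset.sup_le fun v hv => hB.le_sup_line_sup_sup_line hij hac (mem_line.1 hv).1

-- Both sides have dimension `N + 1 - a - c`, the left one because the two sums span `V`.
lemma sup_line_inf_sup_line (hB : IsBilliardArray N B) (hV : finrank F V = N + 1)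
    {i j : Fin 3} (hij : i ≠ j) {a c : ℕ} (hac : a + c ≤ N + 1) :
    (line N i a).sup B ⊓ (line N j c).sup B = ((line N j c).filter fun v => a ≤ v i).sup B := by
  symm
  refine Submodule.eq_of_le_of_finrank_le (Finset.sup_le fun v hv => ?_) ?_
  · obtain ⟨hv, hva⟩ := mem_filter.1 hv
    exact le_inf (hB.le_sup_line_of_le (mem_line.1 hv).1 hva) (Finset.le_sup hv)
  · have := Submodule.finrank_sup_add_finrank_inf_eq ((line N i a).sup B) ((line N j c).sup B)
    rw [hB.sup_line_sup_sup_line_eq_top hV hij hac, finrank_top, hV, hB.finrank_sup_line,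
      hB.finrank_sup_line] at this
    rw [hB.finrank_sup_of_subset_line (filter_subset _ _), card_filter_line hij]
    omega

end IsBilliardArray

end BA

/-- A Billiard Array is injective on `Δ_N`. -/
theorem stmt16 {F V : Type*} [Field F] [AddCommGroup V] [Module F V] (N : ℕ)
    (hV : Module.finrank F V = N + 1) (B : (Fin 3 → ℕ) → Submodule F V)
    (hB : BA.IsBilliardArray N B)
    (l m : Fin 3 → ℕ) (hl : l ∈ BA.Delta N) (hm : m ∈ BA.Delta N)
    (h : B l = B m) : l = m := by
  have : FiniteDimensional F V := Module.finite_of_finrank_eq_succ hV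
  by_contra hne
  obtain ⟨i, hi⟩ := BA.exists_lt_of_ne hl hm hne
  obtain ⟨j, hji⟩ := exists_ne i
  have hi_le : B l ≤ (BA.line N i (l i + 1)).sup B := h ▸ hB.le_sup_line_of_le hm hi
  have hj_le : B l ≤ (BA.line N j (l j)).sup B := Finset.le_sup (BA.mem_line.2 ⟨hl, rfl⟩)
  have hdisj : Disjoint (B l) (((BA.line N j (l j)).filter fun v => l i + 1 ≤ v i).sup B) :=
    hB.disjoint_sup_of_subset_line (Finset.filter_subset _ _) (BA.mem_line.2 ⟨hl, rfl⟩)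
      (by simp)
  have hsum : l i + 1 + l j ≤ N + 1 := by have := BA.add_le_of_mem_Delta hl hji.symm; omega
  rw [← hB.sup_line_inf_sup_line hV hji.symm hsum] at hdisj
  exact (hB.isAtom hl).ne_bot (hdisj.eq_bot_of_le (le_inf hi_le hj_le))
end

section
/- Let F be a field, N a natural number, V an (N+1)-dimensional vector space over F, and B a Billiard Array on V. Let λ, μ be adjacent locations in Δ_N and let ν be the unique location in Δ_N such that {λ, μ, ν} is a black 3-clique. Then for every nonzero vector u ∈ B_λ there exists a unique vector v ∈ B_μ such that v ≠ 0 and u + v ∈ B_ν (i.e., every nonzero u ∈ B_λ is contained in a unique brace for the edge {λ,μ}). -/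
/-- Adjacency: `u - v = e_i - e_j` (computed in `ℤ³`) for some `i ≠ j`. -/
def BA.Adj (u v : Fin 3 → ℕ) : Prop :=
  ∃ i j : Fin 3, i ≠ j ∧ ∀ k, (u k : ℤ) - (v k : ℤ) =
    (if k = i then 1 else 0) - (if k = j then 1 else 0)

/-!
Each pair of locations in a black 3-clique lies on a common line, so the three one-dimensional
subspaces `B l`, `B m`, `B n` are pairwise disjoint. In a modular lattice, pairwise
disjointness together with `Disjoint (B l) (B m ⊔ B n)` would make the triple independent;
since the clique is not direct and `B l` is an atom, `B l ≤ B m ⊔ B n`. Writing a nonzero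
`u ∈ B l` as `q + w` with `q ∈ B m`, `w ∈ B n` gives the brace `v = -q`, and two braces differ
by a vector of `B m ⊓ B n = ⊥`.
-/

theorem Submodule.existsUnique_add_mem_of_le_sup {R M : Type*} [Ring R] [AddCommGroup M]
    [Module R M] {P Q T : Submodule R M} (hle : P ≤ Q ⊔ T) (hPT : Disjoint P T)
    (hQT : Disjoint Q T) {u : M} (hu : u ∈ P) (hu0 : u ≠ 0) :
    ∃! v : M, v ∈ Q ∧ v ≠ 0 ∧ u + v ∈ T := by
  obtain ⟨q, hq, w, hw, hqw⟩ := Submodule.mem_sup.mp (hle hu)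
  have huq : u + -q ∈ T := by rwa [← hqw, add_neg_cancel_comm]
  refine ⟨-q, ⟨Q.neg_mem hq, ?_, huq⟩, ?_⟩
  · rintro hq0
    rw [hq0, add_zero] at huq
    exact hu0 (Submodule.disjoint_def.mp hPT u hu huq)
  · rintro v ⟨hv, -, huv⟩
    have hdiff : v - -q ∈ T := by
      simpa only [add_sub_add_left_eq_sub] using T.sub_mem huv huq
    exact sub_eq_zero.mp (Submodule.disjoint_def.mp hQT _ (Q.sub_mem hv (Q.neg_mem hq)) hdiff)

theorem iSupIndep_fin_three_of_disjoint {α : Type*} [CompleteLattice α] [IsModularLattice α]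
    {f : Fin 3 → α} (h12 : Disjoint (f 1) (f 2)) (h0 : Disjoint (f 0) (f 1 ⊔ f 2)) :
    iSupIndep f := by
  refine iSupIndep_fin_three.mpr ⟨h0, h12.disjoint_sup_right_of_disjoint_sup_left h0.symm, ?_⟩
  rw [sup_comm]
  exact h12.symm.disjoint_sup_right_of_disjoint_sup_left (sup_comm (f 1) (f 2) ▸ h0.symm)

theorem iSupIndep_insert_insert_singleton {ι α : Type*} [CompleteLattice α]
    [IsModularLattice α] {f : ι → α} {a b c : ι} (hbc : Disjoint (f b) (f c))
    (ha : Disjoint (f a) (f b ⊔ f c)) :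
    iSupIndep fun x : ({a, b, c} : Set ι) => f x := by
  let g : Fin 3 → ({a, b, c} : Set ι) := ![⟨a, by simp⟩, ⟨b, by simp⟩, ⟨c, by simp⟩]
  have hg : Function.Surjective g := by
    rintro ⟨x, hx | hx | hx⟩
    exacts [⟨0, Subtype.ext hx.symm⟩, ⟨1, Subtype.ext hx.symm⟩, ⟨2, Subtype.ext hx.symm⟩]
  exact iSupIndep.comp' (iSupIndep_fin_three_of_disjoint (f := fun i => f (g i)) hbc ha) hg

namespace BA

theorem blackSet_subset_Delta {N r s t : ℕ} (hrst : r + s + t + 1 = N) :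
    blackSet r s t ⊆ Delta N := by
  rintro p (rfl | rfl | rfl) <;> simp only [Delta, Set.mem_ofPred_eq, Matrix.cons_val] <;> omega

theorem exists_apply_eq_of_mem_blackSet {r s t : ℕ} {p q : Fin 3 → ℕ}
    (hp : p ∈ blackSet r s t) (hq : q ∈ blackSet r s t) : ∃ η, p η = q η := by
  rcases hp with rfl | rfl | rfl <;> rcases hq with rfl | rfl | rfl <;>
    first | exact ⟨0, rfl⟩ | exact ⟨1, rfl⟩ | exact ⟨2, rfl⟩

theorem ncard_blackSet (r s t : ℕ) : (blackSet r s t).ncard = 3 :=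
  Set.ncard_eq_three.mpr ⟨_, _, _, by simp, by simp, by simp, rfl⟩

theorem ne_of_insert_eq_blackSet {r s t : ℕ} {l m n : Fin 3 → ℕ}
    (hset : ({l, m, n} : Set (Fin 3 → ℕ)) = blackSet r s t) : l ≠ n ∧ m ≠ n := by
  have h3 : ({l, m, n} : Set (Fin 3 → ℕ)).ncard = 3 := hset ▸ ncard_blackSet r s t
  constructor <;> rintro rfl
  · have := Set.ncard_insert_le m {l}
    simp only [Set.insert_comm l m, Set.mem_singleton_iff, Set.insert_eq_of_mem,
      Set.ncard_singleton] at h3 this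
    omega
  · have := Set.ncard_insert_le l {m}
    simp only [Set.mem_singleton_iff, Set.insert_eq_of_mem, Set.ncard_singleton] at h3 this
    omega

namespace IsBilliardArray

variable {F V : Type*} [Field F] [AddCommGroup V] [Module F V] {N : ℕ}
  {B : (Fin 3 → ℕ) → Submodule F V}

theorem disjoint_of_apply_eq (hB : IsBilliardArray N B) {p q : Fin 3 → ℕ} (hp : p ∈ Delta N)
    (hq : q ∈ Delta N) (hpq : p ≠ q) {η : Fin 3} (hη : p η = q η) : Disjoint (B p) (B q) := by
  have hηN : p η ≤ N := calc
    p η ≤ ∑ i, p i := Finset.single_le_sum (fun i _ => Nat.zero_le (p i)) (Finset.mem_univ η)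
    _ = N := by rw [Fin.sum_univ_three]; exact hp
  have hline := hB.2.1 {v ∈ Delta N | v η = p η} ⟨η, p η, hηN, rfl⟩
  exact hline.pairwiseDisjoint (i := ⟨p, hp, rfl⟩) (j := ⟨q, hq, hη.symm⟩)
    fun h => hpq (congrArg Subtype.val h)

theorem disjoint_of_mem_blackSet (hB : IsBilliardArray N B) {r s t : ℕ}
    (hrst : r + s + t + 1 = N) {p q : Fin 3 → ℕ} (hp : p ∈ blackSet r s t)
    (hq : q ∈ blackSet r s t) (hpq : p ≠ q) : Disjoint (B p) (B q) :=
  have ⟨_, hη⟩ := exists_apply_eq_of_mem_blackSet hp hq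
  hB.disjoint_of_apply_eq (blackSet_subset_Delta hrst hp) (blackSet_subset_Delta hrst hq) hpq hη

theorem le_sup_of_insert_eq_blackSet (hB : IsBilliardArray N B) {r s t : ℕ}
    (hrst : r + s + t + 1 = N) {l m n : Fin 3 → ℕ}
    (hset : ({l, m, n} : Set (Fin 3 → ℕ)) = blackSet r s t) (hmn : Disjoint (B m) (B n)) :
    B l ≤ B m ⊔ B n := by
  have hdep := hB.2.2 r s t hrst
  rw [← hset] at hdep
  have hatom : IsAtom (B l) := Submodule.isAtom_iff_finrank_eq_one.mpr
    (hB.1 l (blackSet_subset_Delta hrst (hset ▸ by simp)))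
  exact hatom.not_disjoint_iff_le.mp fun h => hdep (iSupIndep_insert_insert_singleton hmn h)

end IsBilliardArray

end BA

theorem stmt18_general {F V : Type*} [Field F] [AddCommGroup V] [Module F V] (N : ℕ)
    (B : (Fin 3 → ℕ) → Submodule F V)
    (hB : BA.IsBilliardArray N B)
    (l m n : Fin 3 → ℕ)
    (hblack : ∃ r s t : ℕ, r + s + t + 1 = N ∧
      ({l, m, n} : Set (Fin 3 → ℕ)) = BA.blackSet r s t) :
    ∀ u ∈ B l, u ≠ 0 → ∃! v : V, v ∈ B m ∧ v ≠ 0 ∧ u + v ∈ B n := by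
  obtain ⟨r, s, t, hrst, hset⟩ := hblack
  have hmem : ∀ p ∈ ({l, m, n} : Set (Fin 3 → ℕ)), p ∈ BA.blackSet r s t := fun p hp => hset ▸ hp
  obtain ⟨hln, hmn⟩ := BA.ne_of_insert_eq_blackSet hset
  have hdisj_ln := hB.disjoint_of_mem_blackSet hrst (hmem l (by simp)) (hmem n (by simp)) hln
  have hdisj_mn := hB.disjoint_of_mem_blackSet hrst (hmem m (by simp)) (hmem n (by simp)) hmn
  intro u hu hu0
  exact Submodule.existsUnique_add_mem_of_le_sup
    (hB.le_sup_of_insert_eq_blackSet hrst hset hdisj_mn) hdisj_ln hdisj_mn hu hu0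

/-- Let `B` be a Billiard Array on `V`, let `λ, μ` be adjacent locations in
`Δ_N`, and let `ν` be the location such that `{λ,μ,ν}` is a black 3-clique.
Then every nonzero `u ∈ B_λ` lies in a unique brace for the edge `{λ,μ}`:
there is a unique `v ∈ B_μ` with `v ≠ 0` and `u + v ∈ B_ν`. -/
theorem stmt18 {F V : Type*} [Field F] [AddCommGroup V] [Module F V] (N : ℕ)
    (hV : Module.finrank F V = N + 1) (B : (Fin 3 → ℕ) → Submodule F V)
    (hB : BA.IsBilliardArray N B)
    (l m n : Fin 3 → ℕ) (hl : l ∈ BA.Delta N) (hm : m ∈ BA.Delta N)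
    (hadj : BA.Adj l m)
    (hblack : ∃ r s t : ℕ, r + s + t + 1 = N ∧
      ({l, m, n} : Set (Fin 3 → ℕ)) = BA.blackSet r s t) :
    ∀ u ∈ B l, u ≠ 0 → ∃! v : V, v ∈ B m ∧ v ≠ 0 ∧ u + v ∈ B n :=
  stmt18_general N B hB l m n hblack
end

section
/- Let F be a field and let N ≥ 1 be an integer. In the polynomial ring F[x,y,z], for each location λ = (r,s,t) in Δ_N define the polynomial P_λ = (x−y)^r (y−z)^s (z−x)^t. Then: (i) for each line L in Δ_N the polynomials (P_λ)_{λ∈L} are linearly independent over F; (ii) for each black 3-clique C in Δ_N the polynomials (P_λ)_{λ∈C} are linearly dependent over F. (In other words, the map λ ↦ P_λ is a Concrete Billiard Array.) -/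
/-- The polynomial `(x-y)^r (y-z)^s (z-x)^t` attached to the location
`(r,s,t)`. -/
noncomputable def BA.P (F : Type*) [Field F] (v : Fin 3 → ℕ) :
    MvPolynomial (Fin 3) F :=
  (MvPolynomial.X 0 - MvPolynomial.X 1) ^ v 0 *
    (MvPolynomial.X 1 - MvPolynomial.X 2) ^ v 1 *
    (MvPolynomial.X 2 - MvPolynomial.X 0) ^ v 2

/-!
Write `A = x - y`, `B = y - z`, `C = z - x`, so that `P_(r,s,t) = A^r B^s C^t`. Since
`A + B + C = 0`, the three members of a black 3-clique sum to `A^r B^s C^t (A + B + C) = 0`.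
On the line `{v η = c}` the factor of index `η` is the common `c`-th power of a linear form, and
the substitution sending the two remaining forms to the variables `u`, `w` of `F[u,w]` turns
the `P_λ` into `(-(u + w))^c` times pairwise distinct monomials, which are linearly independent.
-/

section

open MvPolynomial Function

variable {F : Type*} [Field F]

lemma Fin.funext_three_rotate {α : Type*} {v w : Fin 3 → α} (η : Fin 3) (h₀ : v η = w η)
    (h₁ : v (η + 1) = w (η + 1)) (h₂ : v (η + 2) = w (η + 2)) : v = w := by
  funext k
  obtain ⟨j, rfl⟩ : ∃ j, k = η + j := ⟨k - η, by abel⟩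
  fin_cases j <;> simpa

lemma MvPolynomial.X_zero_add_X_one_ne_zero : (X 0 + X 1 : MvPolynomial (Fin 2) F) ≠ 0 :=
  fun h => by simpa using congrArg (eval ![1, 0]) h

lemma MvPolynomial.linearIndependent_mul_X_pow_mul_X_pow {ι : Type*}
    {g : MvPolynomial (Fin 2) F} (hg : g ≠ 0) {a b : ι → ℕ}
    (hab : Injective fun i => (a i, b i)) :
    LinearIndependent F fun i => g * (X 0 ^ a i * X 1 ^ b i) := by
  have hmono : LinearIndependent F fun i =>
      (monomial (Finsupp.single 0 (a i) + Finsupp.single 1 (b i)) 1 : MvPolynomial (Fin 2) F) := by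
    have := (basisMonomials (Fin 2) F).linearIndependent.comp
      (fun i => Finsupp.single 0 (a i) + Finsupp.single 1 (b i)) fun i j hij => hab <|
        Prod.ext (by simpa using DFunLike.congr_fun hij 0) (by simpa using DFunLike.congr_fun hij 1)
    rwa [coe_basisMonomials] at this
  have hmul := hmono.map' (LinearMap.mulLeft F g) (LinearMap.ker_eq_bot.2 (mul_right_injective₀ hg))
  simpa only [comp_def, LinearMap.mulLeft_apply, X_pow_eq_monomial, monomial_mul, one_mul]
    using hmul

namespace BA

lemma exists_algHom_P_eq (η : Fin 3) :
    ∃ φ : MvPolynomial (Fin 3) F →ₐ[F] MvPolynomial (Fin 2) F, ∀ v,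
      φ (P F v) = (-(X 0 + X 1)) ^ v η * (X 0 ^ v (η + 1) * X 1 ^ v (η + 2)) := by
  fin_cases η
  · exact ⟨aeval ![0, X 0 + X 1, X 1], fun v => by simp [P]; ring⟩
  · exact ⟨aeval ![X 1, 0, X 0 + X 1], fun v => by simp [P]; ring⟩
  · exact ⟨aeval ![X 0 + X 1, X 1, 0], fun v => by simp [P]; ring⟩

lemma linearIndepOn_P_of_apply_eq (η : Fin 3) (c : ℕ) :
    LinearIndepOn F (P F) {v | v η = c} := by
  obtain ⟨φ, hφ⟩ := exists_algHom_P_eq (F := F) η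
  refine LinearIndependent.of_comp φ.toLinearMap ?_
  have hcomp : ⇑φ.toLinearMap ∘ (fun v : {v : Fin 3 → ℕ | v η = c} => P F v) =
      fun v => (-(X 0 + X 1)) ^ c * (X 0 ^ v.1 (η + 1) * X 1 ^ v.1 (η + 2)) := by
    funext v
    have hv : v.1 η = c := v.2
    simp only [comp_apply, AlgHom.toLinearMap_apply, hφ, hv]
  rw [hcomp]
  refine linearIndependent_mul_X_pow_mul_X_pow
    (pow_ne_zero _ (neg_ne_zero.2 X_zero_add_X_one_ne_zero)) fun v w hvw => ?_
  obtain ⟨h₁, h₂⟩ := Prod.mk.inj hvw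
  exact Subtype.ext (Fin.funext_three_rotate η (v.2.trans w.2.symm) h₁ h₂)

lemma P_add_P_add_P_eq_zero (r s t : ℕ) :
    P F ![r + 1, s, t] + P F ![r, s + 1, t] + P F ![r, s, t + 1] = 0 := by
  simp only [P, Matrix.cons_val_zero, Matrix.cons_val_one, Matrix.cons_val_two, Matrix.head_cons,
    Matrix.tail_cons]
  ring

lemma not_linearIndepOn_blackSet (r s t : ℕ) : ¬ LinearIndepOn F (P F) (blackSet r s t) := by
  have hnot : ![r + 1, s, t] ∉ ({![r, s + 1, t], ![r, s, t + 1]} : Set (Fin 3 → ℕ)) := by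
    rintro (h | h) <;> simpa using congrFun h 0
  rw [blackSet, linearIndepOn_insert hnot, Set.image_pair]
  rintro ⟨-, hspan⟩
  refine hspan (Submodule.mem_span_pair.2 ⟨-1, -1, ?_⟩)
  rw [neg_one_smul, neg_one_smul]
  linear_combination -P_add_P_add_P_eq_zero (F := F) r s t

end BA

end

theorem stmt19_general (F : Type*) [Field F] (N : ℕ) :
    (∀ L : Set (Fin 3 → ℕ), BA.IsLine N L →
      LinearIndependent F fun x : L => BA.P F x.1) ∧
    (∀ r s t : ℕ, r + s + t + 1 = N →
      ¬ LinearIndependent F fun x : BA.blackSet r s t => BA.P F x.1) := by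
  refine ⟨?_, fun r s t _ => BA.not_linearIndepOn_blackSet r s t⟩
  rintro L ⟨η, c, -, rfl⟩
  exact (BA.linearIndepOn_P_of_apply_eq η c).mono fun v hv => hv.2

/-- In `F[x,y,z]`, the polynomials `P_{(r,s,t)} = (x-y)^r (y-z)^s (z-x)^t`
indexed by locations of `Δ_N` are linearly independent along every line of
`Δ_N`, and linearly dependent over every black 3-clique of `Δ_N`; i.e., the
map `λ ↦ P_λ` is a Concrete Billiard Array. -/
theorem stmt19 (F : Type*) [Field F] (N : ℕ) (hN : 1 ≤ N) :
    (∀ L : Set (Fin 3 → ℕ), BA.IsLine N L →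
      LinearIndependent F fun x : L => BA.P F x.1) ∧
    (∀ r s t : ℕ, r + s + t + 1 = N →
      ¬ LinearIndependent F fun x : BA.blackSet r s t => BA.P F x.1) :=
  stmt19_general F N
end
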